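/- Suppose n ≥ l+1, and let f and g be surjections from {1,…,n} onto {1,…,l+1} whose fiber partitions of {1,…,n} are different. Then W_{n,l}^{𝔖_f} ≠ W_{n,l}^{𝔖_g}. Consequently, the number of distinct subspaces of W_{n,l} of the form W_{n,l}^{𝔖_f}, as f ranges over all surjections from {1,…,n} onto {1,…,l+1}, equals S(n, l+1), the number of partitions of {1,…,n} into l+1 nonempty blocks. -/

import Mathlib

noncomputable section

open ExteriorAlgebra

/-- The sum-of-coordinates linear functional on `ℂ^n`. -/
def sumLin (n : ℕ) : (Fin n → ℂ) →ₗ[ℂ] ℂ where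
  toFun x := ∑ i, x i
  map_add' x y := by simp [Finset.sum_add_distrib]
  map_smul' c x := by simp [Finset.mul_sum]

/-- The standard representation `V_n = {x : ℂ^n | x_1 + ⋯ + x_n = 0}`. -/
def stdRep (n : ℕ) : Submodule ℂ (Fin n → ℂ) := LinearMap.ker (sumLin n)

/-- The exterior algebra of `ℂ^n`; the ambient home of `⋀^l ℂ^n`. -/
abbrev EA (n : ℕ) := ExteriorAlgebra ℂ (Fin n → ℂ)

/-- `W_{n,l} = ⋀^l V_n`, realized inside `⋀^l ℂ^n ⊆ ExteriorAlgebra ℂ ℂ^n`. -/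
def Wsub (n l : ℕ) : Submodule ℂ (EA n) :=
  (⋀[ℂ]^l ↥(stdRep n)).map (ExteriorAlgebra.map (stdRep n).subtype).toLinearMap

/-- The action of a permutation `σ ∈ 𝔖_n` on `⋀ ℂ^n`, induced by `(σ • x) i = x (σ⁻¹ i)`
(so that `σ • e_j = e_{σ j}`). -/
def permMap (n : ℕ) (σ : Equiv.Perm (Fin n)) : EA n →ₗ[ℂ] EA n :=
  (ExteriorAlgebra.map (LinearMap.funLeft ℂ ℂ ⇑σ⁻¹)).toLinearMap

/-- The standard basis vector `e_i` of `ℂ^n`. -/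
def evec (n : ℕ) (i : Fin n) : Fin n → ℂ := Pi.single i 1

/-- For an `(l+1)`-subset `α = {a_0 < a_1 < ⋯ < a_l}` of `{1,…,n}`,
the family of vectors `e_{a_i} − e_{a_0}`, `i = 1, …, l`. -/
def uvecs (n l : ℕ) (α : Finset (Fin n)) (hα : α.card = l + 1) : Fin l → (Fin n → ℂ) :=
  fun i => evec n ↑(α.orderIsoOfFin hα i.succ) - evec n ↑(α.orderIsoOfFin hα 0)

/-- The vector `w_α = (e_{a_1} − e_{a_0}) ∧ ⋯ ∧ (e_{a_l} − e_{a_0})`. -/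
def wvec (n l : ℕ) (α : Finset (Fin n)) (hα : α.card = l + 1) : EA n :=
  ιMulti ℂ l (uvecs n l α hα)

/-- The standard Hermitian inner product on `ℂ^n` against a fixed vector `u`
(linear in the first slot). -/
def stdInner (n : ℕ) (u : Fin n → ℂ) : (Fin n → ℂ) →ₗ[ℂ] ℂ where
  toFun x := ∑ k, x k * (starRingEnd ℂ) (u k)
  map_add' x y := by simp [add_mul, Finset.sum_add_distrib]
  map_smul' c x := by simp [Finset.mul_sum, mul_assoc]

/-- The linear map `x ↦ (⟨x, u_1⟩, …, ⟨x, u_l⟩)`. -/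
def rowsMap (n l : ℕ) (u : Fin l → (Fin n → ℂ)) : (Fin n → ℂ) →ₗ[ℂ] (Fin l → ℂ) :=
  LinearMap.pi fun j => stdInner n (u j)

/-- The alternating map `(v_1, …, v_l) ↦ det (⟨v_i, u_j⟩)_{ij}`. -/
def detPair (n l : ℕ) (u : Fin l → (Fin n → ℂ)) : (Fin n → ℂ) [⋀^Fin l]→ₗ[ℂ] ℂ :=
  (Matrix.detRowAlternating : (Fin l → ℂ) [⋀^Fin l]→ₗ[ℂ] ℂ).compLinearMap (rowsMap n l u)

/-- The linear functional `v ↦ ⟨v, u_1 ∧ ⋯ ∧ u_l⟩` on the exterior algebra: the Hermitian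
inner product on `⋀^l ℂ^n` induced by the standard inner product, paired against a
fixed pure wedge, extended by zero in other degrees. -/
def pairFun (n l : ℕ) (u : Fin l → (Fin n → ℂ)) : EA n →ₗ[ℂ] ℂ :=
  liftAlternating (fun i => if h : l = i then h ▸ detPair n l u else 0)

/-- The hyperplane `H_α = {v ∈ W_{n,l} : ⟨v, w_α⟩ = 0}`. -/
def Hplane (n l : ℕ) (α : Finset (Fin n)) (hα : α.card = l + 1) : Submodule ℂ (EA n) :=
  Wsub n l ⊓ LinearMap.ker (pairFun n l (uvecs n l α hα))
/-- The linear map `ℂ^n → ℂ^m` sending `e_i` to `e_{f i}`. -/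
def pushLin (n m : ℕ) (f : Fin n → Fin m) : (Fin n → ℂ) →ₗ[ℂ] (Fin m → ℂ) where
  toFun x := fun j => ∑ i ∈ Finset.univ.filter (fun i => f i = j), x i
  map_add' x y := by funext j; simp [Finset.sum_add_distrib]
  map_smul' c x := by funext j; simp [Finset.mul_sum]

/-- The induced map `f_* : ⋀ ℂ^n → ⋀ ℂ^m` (the exterior power of `e_i ↦ e_{f i}`). -/
def fstar (n m : ℕ) (f : Fin n → Fin m) : EA n →ₗ[ℂ] EA m :=
  (ExteriorAlgebra.map (pushLin n m f)).toLinearMap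

/-- The Young subgroup `𝔖_f ≤ 𝔖_n` of permutations preserving every fiber of `f`. -/
def youngSubgroup (n m : ℕ) (f : Fin n → Fin m) : Subgroup (Equiv.Perm (Fin n)) where
  carrier := {σ | ∀ i, f (σ i) = f i}
  one_mem' := fun _ => rfl
  mul_mem' := by
    intro a b ha hb i
    have h : (a * b) i = a (b i) := rfl
    rw [h, ha (b i), hb i]
  inv_mem' := by
    intro a ha i
    have h := ha (a⁻¹ i)
    rw [show a (a⁻¹ i) = i from by simp] at h
    exact h.symm

/-- The special flat `F_f`: the intersection (inside `W_{n,l}`) of the hyperplanes `H_α`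
over all `(l+1)`-subsets `α` with `|f(α)| ≤ l`. -/
def specialFlat (n m l : ℕ) (f : Fin n → Fin m) : Submodule ℂ (EA n) :=
  Wsub n l ⊓ ⨅ (α : Finset (Fin n)) (hα : α.card = l + 1) (_ : (α.image f).card ≤ l),
    Hplane n l α hα

/-- The fixed subspace `W_{n,l}^{𝔖_f} = {v ∈ W_{n,l} : σ·v = v for all σ ∈ 𝔖_f}`. -/
def fixedW (n m l : ℕ) (f : Fin n → Fin m) : Submodule ℂ (EA n) :=
  Wsub n l ⊓ ⨅ (σ : Equiv.Perm (Fin n)) (_ : σ ∈ youngSubgroup n m f),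
    LinearMap.ker (permMap n σ - LinearMap.id)

/-- The sections of `f : {1,…,n} → {1,…,m}`: maps `g` with `f ∘ g = id`. -/
abbrev sections (n m : ℕ) (f : Fin n → Fin m) := {g : Fin m → Fin n // f ∘ g = id}

/-- The averaging map `φ_f = (1/n_f) Σ_g g_*`, over all sections `g` of `f`. -/
def phiMap (n m : ℕ) (f : Fin n → Fin m) : EA m →ₗ[ℂ] EA n :=
  letI : Fintype (sections n m f) := Fintype.ofFinite _
  (Nat.card (sections n m f) : ℂ)⁻¹ •
    ∑ g : sections n m f, (ExteriorAlgebra.map (pushLin m n g.1)).toLinearMap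

/-- A flat of the intrinsic arrangement `A_n`: an intersection of a set of hyperplanes `H_α`
(inside the ambient space `W_{n,l}` of the arrangement). -/
def IsFlat (n l : ℕ) (U : Submodule ℂ (EA n)) : Prop :=
  ∃ S : Set {α : Finset (Fin n) // α.card = l + 1},
    U = Wsub n l ⊓ ⨅ a ∈ S, Hplane n l a.1 a.2

/-- The set of lines (one-dimensional flats) of the arrangement `A_n`. -/
def lines (n l : ℕ) : Set (Submodule ℂ (EA n)) :=
  {U | IsFlat n l U ∧ Module.finrank ℂ ↥U = 1}

/-- A flat is stable if it is contained in a special flat `F_f` for some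
surjection `f : {1,…,n} → {1,…,m}` with `m < n`. -/
def IsStable (n l : ℕ) (U : Submodule ℂ (EA n)) : Prop :=
  ∃ (m : ℕ) (f : Fin n → Fin m), Function.Surjective f ∧ m < n ∧ U ≤ specialFlat n m l f

/-- The Stirling number of the second kind `S(n,k)`: the number of partitions of
`{1,…,n}` into `k` nonempty blocks. -/
def stirling (n k : ℕ) : ℕ :=
  Nat.card {P : Finpartition (Finset.univ : Finset (Fin n)) // P.parts.card = k}


/-!
For a surjection `f` onto `{1,…,l+1}` with fibre sizes `c_t = |f⁻¹(t)|`, the vectors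
`c_r 𝟙_{f⁻¹(t)} - c_t 𝟙_{f⁻¹(r)}`, `t ≠ r`, form a basis of the `𝔖_f`-invariants of `V_n`, so
their wedge `w_r` lies in `W_{n,l}^{𝔖_f}`. If `f i ≠ f i'`, pair against `⋀_{t ≠ f i} e_{b t}` for
a section `b` of `f` through `i'`: this gives `c_{f i}^l` on `w_{f i}` but
`-c_{f i}^{l-1} c_{f i'}` on its image under the transposition `(i i')`, so `(i i')` does not fix
`W_{n,l}^{𝔖_f}`. Hence `W_{n,l}^{𝔖_f} ⊆ W_{n,l}^{𝔖_g}` forces every fibre of `g` into a fibre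
of `f`, and `f ↦ W_{n,l}^{𝔖_f}` separates exactly the fibre partitions.
-/

namespace Finpartition

variable {α : Type*} [Fintype α] [DecidableEq α]

theorem parts_eq_image_part (P : Finpartition (Finset.univ : Finset α)) :
    P.parts = Finset.univ.image P.part := by
  ext t
  refine ⟨fun ht => ?_, ?_⟩
  · obtain ⟨x, -, hx⟩ := P.part_surjOn ht
    exact Finset.mem_image.2 ⟨x, Finset.mem_univ x, hx⟩
  · intro ht
    obtain ⟨x, -, rfl⟩ := Finset.mem_image.1 ht
    exact P.part_mem.2 (Finset.mem_univ x)

theorem ext_of_ker_part_eq {P Q : Finpartition (Finset.univ : Finset α)}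
    (h : Setoid.ker P.part = Setoid.ker Q.part) : P = Q := by
  have hpart : P.part = Q.part := by
    ext x y
    rw [P.mem_part_iff_part_eq_part (Finset.mem_univ y) (Finset.mem_univ x),
      Q.mem_part_iff_part_eq_part (Finset.mem_univ y) (Finset.mem_univ x), ← Setoid.ker_def,
      h, Setoid.ker_def]
  ext1
  rw [parts_eq_image_part, parts_eq_image_part, hpart]

def partIndex {k : ℕ} (P : Finpartition (Finset.univ : Finset α)) (h : P.parts.card = k)
    (x : α) : Fin k :=
  P.parts.equivFinOfCardEq h ⟨P.part x, P.part_mem.2 (Finset.mem_univ x)⟩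

theorem ker_partIndex {k : ℕ} (P : Finpartition (Finset.univ : Finset α))
    (h : P.parts.card = k) : Setoid.ker (P.partIndex h) = Setoid.ker P.part :=
  Setoid.ext fun x y => by
    simp only [Setoid.ker_def, partIndex, EmbeddingLike.apply_eq_iff_eq, Subtype.mk.injEq]

theorem partIndex_surjective {k : ℕ} (P : Finpartition (Finset.univ : Finset α))
    (h : P.parts.card = k) : Function.Surjective (P.partIndex h) := by
  intro j
  obtain ⟨x, -, hx⟩ := P.part_surjOn ((P.parts.equivFinOfCardEq h).symm j).2
  exact ⟨x, (Equiv.eq_symm_apply _).1 (Subtype.ext hx)⟩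

end Finpartition

section FiberPartition

variable {α β : Type*} [Fintype α] [DecidableEq α] [DecidableEq β]

def fiberPartition (f : α → β) : Finpartition (Finset.univ : Finset α) :=
  letI : DecidableRel (Setoid.ker f) := fun x y => decEq (f x) (f y)
  Finpartition.ofSetoid (Setoid.ker f)

theorem part_fiberPartition (f : α → β) (x : α) :
    (fiberPartition f).part x = Finset.univ.filter (fun y => f y = f x) := by
  let _ : DecidableRel (Setoid.ker f) := fun x y => decEq (f x) (f y)
  ext y
  rw [Finset.mem_filter_univ, fiberPartition, Finpartition.mem_part_ofSetoid_iff_rel,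
    Setoid.ker_def, eq_comm]

theorem ker_part_fiberPartition (f : α → β) :
    Setoid.ker (fiberPartition f).part = Setoid.ker f := by
  refine Setoid.ext fun x y => ?_
  rw [Setoid.ker_def, Setoid.ker_def, part_fiberPartition, part_fiberPartition]
  refine ⟨fun h => ?_, fun h => by rw [h]⟩
  simpa [eq_comm] using congrArg (y ∈ ·) h

theorem card_parts_fiberPartition [Fintype β] {f : α → β} (hf : Function.Surjective f) :
    (fiberPartition f).parts.card = Fintype.card β := by
  have hfib : Function.Injective fun b => Finset.univ.filter (fun y => f y = b) := by
    intro b b' h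
    obtain ⟨x, rfl⟩ := hf b
    simpa using congrArg (x ∈ ·) h
  have hpart : (fiberPartition f).part = (fun b => Finset.univ.filter (fun y => f y = b)) ∘ f :=
    funext (part_fiberPartition f)
  rw [Finpartition.parts_eq_image_part, hpart, ← Finset.image_image,
    Finset.image_univ_of_surjective hf, Finset.card_image_of_injective _ hfib, Finset.card_univ]

end FiberPartition

theorem ncard_image_surjections_eq_card_finpartitions {α γ : Type*} [Fintype α]
    [DecidableEq α] {k : ℕ} (F : (α → Fin k) → γ)
    (hF : ∀ f g, Function.Surjective f → Function.Surjective g →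
      (F f = F g ↔ Setoid.ker f = Setoid.ker g)) :
    {c | ∃ f, Function.Surjective f ∧ c = F f}.ncard =
      Nat.card {P : Finpartition (Finset.univ : Finset α) // P.parts.card = k} := by
  set Φ : {P : Finpartition (Finset.univ : Finset α) // P.parts.card = k} → γ :=
    fun P => F (P.1.partIndex P.2)
  have hΦ : Function.Injective Φ := by
    intro P Q h
    have hker := (hF _ _ (P.1.partIndex_surjective P.2) (Q.1.partIndex_surjective Q.2)).1 h
    rw [Finpartition.ker_partIndex, Finpartition.ker_partIndex] at hker
    exact Subtype.ext (Finpartition.ext_of_ker_part_eq hker)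
  have hrange : {c | ∃ f, Function.Surjective f ∧ c = F f} = Set.range Φ := by
    ext c
    constructor
    · rintro ⟨f, hf, rfl⟩
      refine ⟨⟨fiberPartition f, by rw [card_parts_fiberPartition hf, Fintype.card_fin]⟩, ?_⟩
      refine (hF _ _ (Finpartition.partIndex_surjective _ _) hf).2 ?_
      rw [Finpartition.ker_partIndex, ker_part_fiberPartition]
    · rintro ⟨P, rfl⟩
      exact ⟨_, P.1.partIndex_surjective P.2, rfl⟩
  rw [hrange, ← Nat.card_coe_set_eq, Nat.card_range_of_injective hΦ]

section FixedSubspace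

variable {n m l : ℕ}

theorem mem_youngSubgroup {f : Fin n → Fin m} {σ : Equiv.Perm (Fin n)} :
    σ ∈ youngSubgroup n m f ↔ ∀ i, f (σ i) = f i :=
  Iff.rfl

theorem youngSubgroup_eq_of_ker_eq {m' : ℕ} {f : Fin n → Fin m} {g : Fin n → Fin m'}
    (h : Setoid.ker f = Setoid.ker g) : youngSubgroup n m f = youngSubgroup n m' g := by
  ext σ
  simp only [mem_youngSubgroup, ← Setoid.ker_def]
  rw [h]

theorem swap_mem_youngSubgroup {f : Fin n → Fin m} {i i' : Fin n} (h : f i = f i') :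
    Equiv.swap i i' ∈ youngSubgroup n m f := by
  intro x
  rcases eq_or_ne x i with rfl | hi
  · rw [Equiv.swap_apply_left, h]
  rcases eq_or_ne x i' with rfl | hi'
  · rw [Equiv.swap_apply_right, h]
  · rw [Equiv.swap_apply_of_ne_of_ne hi hi']

theorem mem_fixedW {f : Fin n → Fin m} {v : EA n} :
    v ∈ fixedW n m l f ↔ v ∈ Wsub n l ∧ ∀ σ ∈ youngSubgroup n m f, permMap n σ v = v := by
  simp only [fixedW, Submodule.mem_inf, Submodule.mem_iInf, LinearMap.mem_ker,
    LinearMap.sub_apply, LinearMap.id_apply, sub_eq_zero]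

theorem fixedW_eq_of_ker_eq {m' : ℕ} {f : Fin n → Fin m} {g : Fin n → Fin m'}
    (h : Setoid.ker f = Setoid.ker g) : fixedW n m l f = fixedW n m' l g := by
  rw [fixedW, fixedW, youngSubgroup_eq_of_ker_eq h]

theorem permMap_ιMulti (σ : Equiv.Perm (Fin n)) (v : Fin l → Fin n → ℂ) :
    permMap n σ (ιMulti ℂ l v) = ιMulti ℂ l fun j => v j ∘ ⇑σ⁻¹ := by
  rw [permMap, AlgHom.toLinearMap_apply, ExteriorAlgebra.map_apply_ιMulti]
  rfl

theorem pairFun_evec_ιMulti (y : Fin l → Fin n) (v : Fin l → Fin n → ℂ) :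
    pairFun n l (fun k => evec n (y k)) (ιMulti ℂ l v) = (Matrix.of fun j k => v j (y k)).det := by
  rw [pairFun, liftAlternating_apply_ιMulti, dif_pos rfl]
  change Matrix.det _ = _
  congr 1
  ext j k
  simp [rowsMap, stdInner, evec, Pi.single_apply, apply_ite (starRingEnd ℂ)]

end FixedSubspace

section FiberWedge

variable {n m l : ℕ}

def fiberCard (f : Fin n → Fin m) (t : Fin m) : ℕ :=
  (Finset.univ.filter fun x => f x = t).card

theorem fiberCard_pos {f : Fin n → Fin m} (hf : Function.Surjective f) (t : Fin m) :
    0 < fiberCard f t := by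
  obtain ⟨x, hx⟩ := hf t
  exact Finset.card_pos.2 ⟨x, (Finset.mem_filter_univ x).2 hx⟩

def balancedVec (f : Fin n → Fin m) (a b : Fin m) : Fin n → ℂ :=
  fun x => (if f x = b then (fiberCard f a : ℂ) else 0) - if f x = a then (fiberCard f b : ℂ) else 0

theorem balancedVec_mem_stdRep (f : Fin n → Fin m) (a b : Fin m) :
    balancedVec f a b ∈ stdRep n := by
  simp only [stdRep, LinearMap.mem_ker, sumLin, LinearMap.coe_mk, AddHom.coe_mk, balancedVec,
    Finset.sum_sub_distrib, Finset.sum_ite, Finset.sum_const, nsmul_eq_mul, fiberCard]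
  ring

theorem balancedVec_comp_of_mem_youngSubgroup {f : Fin n → Fin m} {σ : Equiv.Perm (Fin n)}
    (hσ : σ ∈ youngSubgroup n m f) (a b : Fin m) : balancedVec f a b ∘ σ = balancedVec f a b := by
  funext x
  simp only [Function.comp_apply, balancedVec, mem_youngSubgroup.1 hσ x]

theorem balancedVec_apply_of_eq {f : Fin n → Fin m} {a b : Fin m} (hab : a ≠ b) {x : Fin n}
    (hx : f x = a) : balancedVec f a b x = -fiberCard f b := by
  simp [balancedVec, hx, hab]

theorem balancedVec_succAbove_apply {f : Fin n → Fin (l + 1)} (r : Fin (l + 1)) (j k : Fin l)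
    {x : Fin n} (hx : f x = r.succAbove k) :
    balancedVec f r (r.succAbove j) x = if j = k then (fiberCard f r : ℂ) else 0 := by
  simp [balancedVec, hx, eq_comm]

def fiberWedge (f : Fin n → Fin (l + 1)) (r : Fin (l + 1)) : EA n :=
  ιMulti ℂ l fun j => balancedVec f r (r.succAbove j)

theorem fiberWedge_mem_fixedW (f : Fin n → Fin (l + 1)) (r : Fin (l + 1)) :
    fiberWedge f r ∈ fixedW n (l + 1) l f := by
  refine mem_fixedW.2 ⟨⟨ιMulti ℂ l fun j => ⟨_, balancedVec_mem_stdRep f r (r.succAbove j)⟩,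
    ExteriorAlgebra.ιMulti_range ℂ l ⟨_, rfl⟩, ?_⟩, fun σ hσ => ?_⟩
  · rw [AlgHom.toLinearMap_apply, ExteriorAlgebra.map_apply_ιMulti]
    rfl
  · simp only [fiberWedge, permMap_ιMulti,
      balancedVec_comp_of_mem_youngSubgroup ((youngSubgroup n (l + 1) f).inv_mem hσ)]

end FiberWedge

theorem Matrix.det_updateCol_smul_one {ι R : Type*} [Fintype ι] [DecidableEq ι] [CommRing R]
    (c : R) (k : ι) (v : ι → R) :
    (Matrix.updateCol (c • (1 : Matrix ι ι R)) k v).det = c ^ (Fintype.card ι - 1) * v k := by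
  rw [Matrix.det_updateCol_smul_left, ← Matrix.cramer_apply, Matrix.cramer_one,
    Module.End.one_apply]

section Separation

variable {n m l : ℕ}

theorem exists_section_apply_eq {f : Fin n → Fin m} (hf : Function.Surjective f) (x : Fin n) :
    ∃ b : Fin m → Fin n, (∀ t, f (b t) = t) ∧ b (f x) = x := by
  refine ⟨Function.update (Function.surjInv hf) (f x) x, fun t => ?_, by simp⟩
  rcases eq_or_ne t (f x) with rfl | ht
  · simp
  · simp [ht, Function.surjInv_eq hf]

theorem pairFun_fiberWedge_of_section {f : Fin n → Fin (l + 1)} {b : Fin (l + 1) → Fin n}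
    (hb : ∀ t, f (b t) = t) (r : Fin (l + 1)) :
    pairFun n l (fun k => evec n (b (r.succAbove k))) (fiberWedge f r) =
      (fiberCard f r : ℂ) ^ l := by
  have hM : (Matrix.of fun j k => balancedVec f r (r.succAbove j) (b (r.succAbove k))) =
      (fiberCard f r : ℂ) • 1 := by
    ext j k
    simp [balancedVec_succAbove_apply r j k (hb _), Matrix.one_apply]
  rw [fiberWedge, pairFun_evec_ιMulti, hM, Matrix.det_smul, Matrix.det_one, mul_one,
    Fintype.card_fin]

/-- `swap i i'` moves exactly one of the points `b ((f i).succAbove k)`, namely `b (f i') = i'`,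
into the fibre of `f i`, so the matrix `c_{f i} • 1` of the previous lemma gets one column
replaced. -/
theorem pairFun_swap_fiberWedge_of_section {f : Fin n → Fin (l + 1)} {b : Fin (l + 1) → Fin n}
    (hb : ∀ t, f (b t) = t) {i i' : Fin n} (hbi' : b (f i') = i') {k₀ : Fin l}
    (hk₀ : (f i).succAbove k₀ = f i') :
    pairFun n l (fun k => evec n (b ((f i).succAbove k)))
        (permMap n (Equiv.swap i i') (fiberWedge f (f i))) =
      (fiberCard f (f i) : ℂ) ^ (l - 1) * -fiberCard f (f i') := by
  set s := f i with hs
  have hM : (Matrix.of fun j k =>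
      (balancedVec f s (s.succAbove j) ∘ ⇑(Equiv.swap i i')⁻¹) (b (s.succAbove k))) =
      Matrix.updateCol ((fiberCard f s : ℂ) • 1) k₀
        fun j => -(fiberCard f (s.succAbove j) : ℂ) := by
    ext j k
    rw [Matrix.updateCol_apply]
    split_ifs with hk
    · subst hk
      simp [hk₀, hbi', balancedVec_apply_of_eq (Fin.succAbove_ne s j).symm hs.symm]
    · have hy : f (b (s.succAbove k)) = s.succAbove k := hb _
      have hyi : b (s.succAbove k) ≠ i := fun e => Fin.succAbove_ne s k (by rw [← hy, e])
      have hyi' : b (s.succAbove k) ≠ i' := fun e =>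
        hk (Fin.succAbove_right_injective (by rw [hk₀, ← hy, e]))
      simp [Equiv.swap_apply_of_ne_of_ne hyi hyi', balancedVec_succAbove_apply s j k hy,
        Matrix.one_apply]
  rw [fiberWedge, permMap_ιMulti, pairFun_evec_ιMulti, hM, Matrix.det_updateCol_smul_one,
    Fintype.card_fin, hk₀]

theorem permMap_swap_fiberWedge_ne {f : Fin n → Fin (l + 1)} (hf : Function.Surjective f)
    {i i' : Fin n} (h : f i ≠ f i') :
    permMap n (Equiv.swap i i') (fiberWedge f (f i)) ≠ fiberWedge f (f i) := by
  obtain ⟨k₀, hk₀⟩ := Fin.exists_succAbove_eq h.symm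
  obtain ⟨b, hb, hbi'⟩ := exists_section_apply_eq hf i'
  intro heq
  have hval := pairFun_swap_fiberWedge_of_section hb hbi' hk₀
  rw [heq, pairFun_fiberWedge_of_section hb, ← pow_sub_one_mul k₀.pos.ne'] at hval
  have hc : (fiberCard f (f i) : ℂ) = -fiberCard f (f i') :=
    mul_left_cancel₀ (pow_ne_zero _ (Nat.cast_ne_zero.2 (fiberCard_pos hf _).ne')) hval
  have hsum : ((fiberCard f (f i) + fiberCard f (f i') : ℕ) : ℂ) = 0 := by
    push_cast
    rw [hc]
    ring
  have := fiberCard_pos hf (f i)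
  rw [Nat.cast_eq_zero] at hsum
  omega

theorem ker_le_of_fixedW_le {f : Fin n → Fin (l + 1)} {g : Fin n → Fin m}
    (hf : Function.Surjective f) (h : fixedW n (l + 1) l f ≤ fixedW n m l g) :
    Setoid.ker g ≤ Setoid.ker f := by
  intro i i' hg
  by_contra hfi
  have hw := (mem_fixedW.1 (h (fiberWedge_mem_fixedW f (f i)))).2
  exact permMap_swap_fiberWedge_ne hf hfi (hw _ (swap_mem_youngSubgroup hg))

theorem fixedW_eq_fixedW_iff {f g : Fin n → Fin (l + 1)} (hf : Function.Surjective f)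
    (hg : Function.Surjective g) :
    fixedW n (l + 1) l f = fixedW n (l + 1) l g ↔ Setoid.ker f = Setoid.ker g :=
  ⟨fun h => le_antisymm (ker_le_of_fixedW_le hg h.ge) (ker_le_of_fixedW_le hf h.le),
    fixedW_eq_of_ker_eq⟩

end Separation

theorem range_preimage_singleton_eq_classes_ker {α β : Type*} {f : α → β}
    (hf : Function.Surjective f) : (Set.range fun b => f ⁻¹' {b}) = (Setoid.ker f).classes := by
  ext S
  constructor
  · rintro ⟨b, rfl⟩
    obtain ⟨x, rfl⟩ := hf b
    exact ⟨x, rfl⟩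
  · rintro ⟨x, rfl⟩
    exact ⟨f x, rfl⟩

theorem statement_13_general (n l : ℕ) :
    (∀ f g : Fin n → Fin (l + 1), Function.Surjective f → Function.Surjective g →
      (Set.range fun j => f ⁻¹' {j}) ≠ (Set.range fun j => g ⁻¹' {j}) →
      fixedW n (l + 1) l f ≠ fixedW n (l + 1) l g) ∧
    Set.ncard {U : Submodule ℂ (EA n) |
        ∃ f : Fin n → Fin (l + 1), Function.Surjective f ∧ U = fixedW n (l + 1) l f}
      = stirling n (l + 1) := by
  refine ⟨fun f g hf hg hfibers hW => hfibers ?_, ?_⟩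
  · rw [range_preimage_singleton_eq_classes_ker hf, range_preimage_singleton_eq_classes_ker hg,
      (fixedW_eq_fixedW_iff hf hg).1 hW]
  · exact ncard_image_surjections_eq_card_finpartitions _ fun _ _ hf hg =>
      fixedW_eq_fixedW_iff hf hg

/-- Surjections `f, g : {1,…,n} ↠ {1,…,l+1}` with different fiber partitions give different
fixed subspaces `W_{n,l}^{𝔖_f}`; consequently the number of distinct subspaces of this form
equals the Stirling number `S(n, l+1)`. -/
theorem statement_13 (n l : ℕ) (hl1 : 1 ≤ l) (hn : l + 1 ≤ n) :
    (∀ f g : Fin n → Fin (l + 1), Function.Surjective f → Function.Surjective g →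
      (Set.range fun j => f ⁻¹' {j}) ≠ (Set.range fun j => g ⁻¹' {j}) →
      fixedW n (l + 1) l f ≠ fixedW n (l + 1) l g) ∧
    Set.ncard {U : Submodule ℂ (EA n) |
        ∃ f : Fin n → Fin (l + 1), Function.Surjective f ∧ U = fixedW n (l + 1) l f}
      = stirling n (l + 1) :=
  statement_13_general n l
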